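/- Let G = (V, E) be a finite simple graph with n vertices and m edges, with a fixed orientation assigning to each edge e = uv an ordered pair of its endpoints, and let k be a positive integer. Let G′ = (V′, E′) be the graph constructed from G as follows: replace each vertex u ∈ V by a path u₁u₂u₃ on three new vertices; for each edge e = uv ∈ E introduce four new vertices e_u, e_v, e_w, e_z and the edges e_u e_v, e_v e_w, e_w e_u, e_w e_z; and add the edges u₃ e_u and v₃ e_v. If G′ has a vertex cover of size at most 2n + 2m − k, then G has a vertex cover of size at most n − k. -/

import Mathlib

/-- The generating relation of the graph `G′` built from `G` (with an orientation given by
`fst`/`snd`): each vertex `u` is replaced by a path `u₁u₂u₃` (the vertices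
`Sum.inl (u, 0)`, `Sum.inl (u, 1)`, `Sum.inl (u, 2)`); each edge `e = uv` gets a gadget on
`e_u = Sum.inr (e, 0)`, `e_v = Sum.inr (e, 1)`, `e_w = Sum.inr (e, 2)`,
`e_z = Sum.inr (e, 3)` with edges `e_u e_v, e_v e_w, e_w e_u, e_w e_z`; and the edges
`u₃ e_u` and `v₃ e_v` are added, where `u = fst e` and `v = snd e`. -/
def vcu2Rel {V : Type*} (G : SimpleGraph V) (fst snd : Sym2 V → V) :
    ((V × Fin 3) ⊕ (↥G.edgeSet × Fin 4)) → ((V × Fin 3) ⊕ (↥G.edgeSet × Fin 4)) → Prop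
  | Sum.inl (u, i), Sum.inl (w, j) => u = w ∧ ((i = 0 ∧ j = 1) ∨ (i = 1 ∧ j = 2))
  | Sum.inr (e, i), Sum.inr (f, j) =>
      e = f ∧ ((i = 0 ∧ j = 1) ∨ (i = 1 ∧ j = 2) ∨ (i = 2 ∧ j = 0) ∨ (i = 2 ∧ j = 3))
  | Sum.inl (u, i), Sum.inr (e, j) =>
      i = 2 ∧ ((j = 0 ∧ fst e.val = u) ∨ (j = 1 ∧ snd e.val = u))
  | _, _ => False

/-- The graph `G′` constructed from `G` and the orientation `fst`/`snd`. -/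
def vcu2Graph {V : Type*} (G : SimpleGraph V) (fst snd : Sym2 V → V) :
    SimpleGraph ((V × Fin 3) ⊕ (↥G.edgeSet × Fin 4)) :=
  SimpleGraph.fromRel (vcu2Rel G fst snd)

/-!
A vertex cover `C'` of `G′` meets every vertex path in at least one vertex and every edge gadget
in at least two (it must cover the disjoint edges `e_u e_v` and `e_w e_z`), which accounts for
`n + 2m` of its elements. Call `u` heavy if `C'` contains at least two vertices of its path and
`e` heavy if `C'` contains at least three vertices of its gadget; the surplus gives
`#heavy vertices + #heavy edges ≤ n - k`. If `u₃ ∈ C'` then `u` is heavy (`u₁u₂` must be covered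
too), so for an edge `uv` with both endpoints light, `C'` must contain `e_u` and `e_v` besides a
vertex of `e_w e_z`, and `e` is heavy. Hence the heavy vertices together with the tails `fst e`
of the heavy edges cover `G`.
-/

namespace Set

variable {α β ι κ : Type*}

theorem ncard_eq_sum_ite [Fintype α] (s : Set α) [DecidablePred (· ∈ s)] :
    s.ncard = ∑ x, if x ∈ s then 1 else 0 := by
  rw [← Finset.card_filter, ncard_eq_toFinset_card']
  congr 1
  ext
  simp

def inlFiber (S : Set ((α × ι) ⊕ (β × κ))) (a : α) : Set ι := {i | Sum.inl (a, i) ∈ S}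

def inrFiber (S : Set ((α × ι) ⊕ (β × κ))) (b : β) : Set κ := {j | Sum.inr (b, j) ∈ S}

theorem ncard_eq_sum_ncard_inlFiber_add_sum_ncard_inrFiber [Fintype α] [Fintype β]
    [Fintype ι] [Fintype κ] (S : Set ((α × ι) ⊕ (β × κ))) :
    S.ncard = ∑ a, (S.inlFiber a).ncard + ∑ b, (S.inrFiber b).ncard := by
  classical
  simp only [ncard_eq_sum_ite, Fintype.sum_sum_type, Fintype.sum_prod_type, inlFiber, inrFiber,
    mem_ofPred_eq]

end Set

theorem mul_card_add_ncard_lt_le_sum {ι : Type*} [Fintype ι] (f : ι → ℕ) (a : ℕ)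
    (h : ∀ i, a ≤ f i) : a * Fintype.card ι + {i | a < f i}.ncard ≤ ∑ i, f i := by
  classical
  rw [Set.ncard_eq_sum_ite, mul_comm, ← Finset.card_univ, ← smul_eq_mul, ← Finset.sum_const,
    ← Finset.sum_add_distrib]
  refine Finset.sum_le_sum fun i _ => ?_
  split_ifs with hi
  · exact hi
  · simpa using h i

namespace vcu2Graph

open SimpleGraph Set

variable {V : Type*} {G : SimpleGraph V} {fst snd : Sym2 V → V}
  {C' : Set ((V × Fin 3) ⊕ (↥G.edgeSet × Fin 4))}

theorem mem_or_mem_of_rel (hC' : (vcu2Graph G fst snd).IsVertexCover C')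
    {x y : (V × Fin 3) ⊕ (↥G.edgeSet × Fin 4)} (hxy : x ≠ y) (h : vcu2Rel G fst snd x y) :
    x ∈ C' ∨ y ∈ C' :=
  hC' <| (fromRel_adj _ _ _).2 ⟨hxy, Or.inl h⟩

theorem one_le_ncard_inlFiber (hC' : (vcu2Graph G fst snd).IsVertexCover C') (u : V) :
    1 ≤ (C'.inlFiber u).ncard := by
  rw [Nat.one_le_iff_ne_zero, Ne, ncard_eq_zero, ← Ne, ← nonempty_iff_ne_empty]
  rcases mem_or_mem_of_rel hC' (x := .inl (u, 0)) (y := .inl (u, 1)) (by simp) (by simp [vcu2Rel])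
    with h | h
  exacts [⟨0, h⟩, ⟨1, h⟩]

theorem two_le_ncard_inrFiber (hC' : (vcu2Graph G fst snd).IsVertexCover C') (e : G.edgeSet) :
    2 ≤ (C'.inrFiber e).ncard := by
  have huv := mem_or_mem_of_rel hC' (x := .inr (e, 0)) (y := .inr (e, 1)) (by simp) (by simp [vcu2Rel])
  have hwz := mem_or_mem_of_rel hC' (x := .inr (e, 2)) (y := .inr (e, 3)) (by simp) (by simp [vcu2Rel])
  refine (one_lt_ncard_iff).2 ?_
  rcases huv with huv | huv <;> rcases hwz with hwz | hwz
  exacts [⟨0, 2, huv, hwz, by decide⟩, ⟨0, 3, huv, hwz, by decide⟩,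
    ⟨1, 2, huv, hwz, by decide⟩, ⟨1, 3, huv, hwz, by decide⟩]

def heavyVertices (C' : Set ((V × Fin 3) ⊕ (↥G.edgeSet × Fin 4))) : Set V :=
  {u | 1 < (C'.inlFiber u).ncard}

def heavyEdges (C' : Set ((V × Fin 3) ⊕ (↥G.edgeSet × Fin 4))) : Set G.edgeSet :=
  {e | 2 < (C'.inrFiber e).ncard}

theorem mem_heavyVertices_of_mem (hC' : (vcu2Graph G fst snd).IsVertexCover C') {u : V}
    (hu : .inl (u, 2) ∈ C') : u ∈ heavyVertices C' := by
  refine (one_lt_ncard_iff).2 ?_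
  rcases mem_or_mem_of_rel hC' (x := .inl (u, 0)) (y := .inl (u, 1)) (by simp) (by simp [vcu2Rel])
    with h | h
  exacts [⟨0, 2, h, hu, by decide⟩, ⟨1, 2, h, hu, by decide⟩]

theorem mem_heavyEdges_of_notMem (hC' : (vcu2Graph G fst snd).IsVertexCover C') {e : G.edgeSet}
    (hfst : .inl (fst e, 2) ∉ C') (hsnd : .inl (snd e, 2) ∉ C') : e ∈ heavyEdges C' := by
  have hu := (mem_or_mem_of_rel hC' (x := .inl (fst e, 2)) (y := .inr (e, 0)) (by simp)
    (by simp [vcu2Rel])).resolve_left hfst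
  have hv := (mem_or_mem_of_rel hC' (x := .inl (snd e, 2)) (y := .inr (e, 1)) (by simp)
    (by simp [vcu2Rel])).resolve_left hsnd
  refine (two_lt_ncard_iff).2 ?_
  rcases mem_or_mem_of_rel hC' (x := .inr (e, 2)) (y := .inr (e, 3)) (by simp) (by simp [vcu2Rel])
    with hwz | hwz
  exacts [⟨0, 1, 2, hu, hv, hwz, by decide⟩, ⟨0, 1, 3, hu, hv, hwz, by decide⟩]

theorem card_add_ncard_heavy_le_ncard [Fintype V] [Fintype G.edgeSet]
    (hC' : (vcu2Graph G fst snd).IsVertexCover C') :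
    Fintype.card V + (heavyVertices C').ncard + (2 * Fintype.card G.edgeSet + (heavyEdges C').ncard)
      ≤ C'.ncard := by
  rw [ncard_eq_sum_ncard_inlFiber_add_sum_ncard_inrFiber]
  gcongr
  · simpa [heavyVertices] using mul_card_add_ncard_lt_le_sum _ 1 (one_le_ncard_inlFiber hC')
  · exact mul_card_add_ncard_lt_le_sum _ 2 (two_le_ncard_inrFiber hC')

variable (fst) in
def heavyCover (C' : Set ((V × Fin 3) ⊕ (↥G.edgeSet × Fin 4))) : Set V :=
  heavyVertices C' ∪ (fun e : G.edgeSet => fst e) '' heavyEdges C'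

theorem ncard_heavyCover_le [Finite V] :
    (heavyCover fst C').ncard ≤ (heavyVertices C').ncard + (heavyEdges C').ncard :=
  (ncard_union_le _ _).trans (Nat.add_le_add_left (ncard_image_le (toFinite _)) _)

theorem isVertexCover_heavyCover (horient : ∀ e ∈ G.edgeSet, e = s(fst e, snd e))
    (hC' : (vcu2Graph G fst snd).IsVertexCover C') : G.IsVertexCover (heavyCover fst C') := by
  intro u v huv
  by_contra! hlight
  let e : G.edgeSet := ⟨s(u, v), huv⟩
  have hend : ∀ w ∈ (e : Sym2 V), .inl (w, 2) ∉ C' := by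
    intro w hw hw'
    rcases Sym2.mem_iff.1 hw with rfl | rfl
    exacts [hlight.1 (.inl (mem_heavyVertices_of_mem hC' hw')),
      hlight.2 (.inl (mem_heavyVertices_of_mem hC' hw'))]
  have hfst : fst e ∈ (e : Sym2 V) := by
    simpa only [← horient e e.2] using Sym2.mem_mk_left (fst e) (snd e)
  have hsnd : snd e ∈ (e : Sym2 V) := by
    simpa only [← horient e e.2] using Sym2.mem_mk_right (fst e) (snd e)
  have he := mem_heavyEdges_of_notMem hC' (hend _ hfst) (hend _ hsnd)
  rcases Sym2.mem_iff.1 hfst with h | h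
  · exact hlight.1 (.inr ⟨e, he, h⟩)
  · exact hlight.2 (.inr ⟨e, he, h⟩)

end vcu2Graph

theorem stmt_18_general {V : Type*} [Fintype V] (G : SimpleGraph V) (fst snd : Sym2 V → V)
    (horient : ∀ e ∈ G.edgeSet, e = s(fst e, snd e)) (k : ℕ)
    (hcover : ∃ C' : Set ((V × Fin 3) ⊕ (↥G.edgeSet × Fin 4)),
      (∀ ⦃x y⦄, (vcu2Graph G fst snd).Adj x y → x ∈ C' ∨ y ∈ C') ∧
      (C'.ncard : ℤ) ≤ 2 * (Fintype.card V : ℤ) + 2 * (G.edgeSet.ncard : ℤ) - k) :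
    ∃ C : Set V, (∀ ⦃u v : V⦄, G.Adj u v → u ∈ C ∨ v ∈ C) ∧
      (C.ncard : ℤ) ≤ (Fintype.card V : ℤ) - k := by
  classical
  obtain ⟨C', hC', hsize⟩ := hcover
  refine ⟨_, vcu2Graph.isVertexCover_heavyCover horient hC', ?_⟩
  have hcover_le := vcu2Graph.ncard_heavyCover_le (fst := fst) (C' := C')
  have hcount := vcu2Graph.card_add_ncard_heavy_le_ncard hC'
  rw [Set.ncard_eq_toFinset_card' G.edgeSet, Set.toFinset_card] at hsize
  omega

/-- If `G′` (built from a finite graph `G` with `n` vertices, `m` edges and a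
fixed orientation `fst`/`snd` of its edges) has a vertex cover of size at most
`2n + 2m − k`, then `G` has a vertex cover of size at most `n − k`. -/
theorem stmt_18 {V : Type*} [Fintype V] (G : SimpleGraph V) (fst snd : Sym2 V → V)
    (horient : ∀ e ∈ G.edgeSet, e = s(fst e, snd e)) (k : ℕ) (hk : 0 < k)
    (hcover : ∃ C' : Set ((V × Fin 3) ⊕ (↥G.edgeSet × Fin 4)),
      (∀ ⦃x y⦄, (vcu2Graph G fst snd).Adj x y → x ∈ C' ∨ y ∈ C') ∧
      (C'.ncard : ℤ) ≤ 2 * (Fintype.card V : ℤ) + 2 * (G.edgeSet.ncard : ℤ) - k) :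
    ∃ C : Set V, (∀ ⦃u v : V⦄, G.Adj u v → u ∈ C ∨ v ∈ C) ∧
      (C.ncard : ℤ) ≤ (Fintype.card V : ℤ) - k :=
  stmt_18_general G fst snd horient k hcover
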